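/- arXiv:1407.4839 — 4 statements merged into one kernel-verified Lean document; each statement's English description precedes it below -/
import Mathlib

section
/- Let f : ℝ → ℝ be continuous and odd (f(-t) = -f(t)), and let g : ℝ → ℂ satisfy Re(g(t)) = f(t) for all t and with t ↦ |g(t)| monotone decreasing (antitone) on [0, ∞). Suppose there exists t₂ > 0 with f(t₂) = |g(t₂)|. Then there exists t₀ ∈ [0, t₂] such that |f(t)| ≤ |f(t₀)| for every t ∈ ℝ; i.e. the global extremum of |f| is attained in [0, t₂]. -/
theorem stmt_2 (f : ℝ → ℝ) (g : ℝ → ℂ)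
    (hf_cont : Continuous f)
    (hf_odd : ∀ t : ℝ, f (-t) = -f t)
    (hre : ∀ t : ℝ, (g t).re = f t)
    (hmono : AntitoneOn (fun t => ‖g t‖) (Set.Ici (0 : ℝ)))
    (t₂ : ℝ) (ht₂ : 0 < t₂) (htouch : f t₂ = ‖g t₂‖) :
    ∃ t₀ ∈ Set.Icc 0 t₂, ∀ t : ℝ, |f t| ≤ |f t₀| := by
  have hfg : ∀ t, |f t| ≤ ‖g t‖ := by
    intro t
    rw [← hre]
    exact Complex.abs_re_le_norm _
  obtain ⟨t₀, ht₀mem, ht₀max⟩ :=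
    (isCompact_Icc (a := (0:ℝ)) (b := t₂)).exists_isMaxOn
      (Set.nonempty_Icc.2 ht₂.le) (hf_cont.abs.continuousOn)
  refine ⟨t₀, ht₀mem, fun t => ?_⟩
  have habs : ∀ s, |f s| = |f (|s|)| := by
    intro s
    rcases le_or_gt 0 s with h | h
    · rw [abs_of_nonneg h]
    · rw [abs_of_neg h, hf_odd, abs_neg]
  rw [habs t]
  rcases le_or_gt |t| t₂ with h | h
  · exact ht₀max ⟨abs_nonneg t, h⟩
  · have h1 : ‖g |t|‖ ≤ ‖g t₂‖ :=
      hmono (Set.mem_Ici.2 ht₂.le) (Set.mem_Ici.2 (abs_nonneg t)) h.le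
    calc |f (|t|)| ≤ ‖g |t|‖ := hfg _
      _ ≤ ‖g t₂‖ := h1
      _ = f t₂ := htouch.symm
      _ ≤ |f t₂| := le_abs_self _
      _ ≤ |f t₀| := ht₀max ⟨ht₂.le, le_refl t₂⟩
end

section
/- Let y : ℝ → ℝ be infinitely differentiable and monotone increasing, with finite limits y₁ = lim_{t→-∞} y(t) and y₂ = lim_{t→+∞} y(t) where y₁ ≠ y₂, and suppose that for every m ≥ 1 the m-th iterated derivative y^{(m)} tends to 0 both as t → +∞ and as t → -∞. Then for every n ≥ 1 the n-th iterated derivative y^{(n)} has at least n − 1 zeros; that is, there exists a finite set S ⊆ ℝ with card S ≥ n − 1 and y^{(n)}(t) = 0 for every t ∈ S. -/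
open Filter Set

private lemma max_crit (f : ℝ → ℝ) (hd : Differentiable ℝ f) {b B a : ℝ}
    (h1 : b < a) (h2 : a < B) (hfb : f b < f a) (hfB : f B < f a) :
    ∃ c, b < c ∧ c < B ∧ deriv f c = 0 := by
  obtain ⟨c, hc, hmax⟩ := isCompact_Icc.exists_isMaxOn
    (Set.nonempty_Icc.2 (h1.trans h2).le) hd.continuous.continuousOn
  have hac : f a ≤ f c := hmax (Set.mem_Icc.2 ⟨h1.le, h2.le⟩)
  have hcb : c ≠ b := by rintro rfl; exact absurd hac (not_le.2 hfb)
  have hcB : c ≠ B := by rintro rfl; exact absurd hac (not_le.2 hfB)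
  have hco : b < c ∧ c < B :=
    ⟨lt_of_le_of_ne hc.1 (Ne.symm hcb), lt_of_le_of_ne hc.2 hcB⟩
  exact ⟨c, hco.1, hco.2,
    (hmax.isLocalMax (Icc_mem_nhds hco.1 hco.2)).deriv_eq_zero⟩

private lemma crit_of_ne (f : ℝ → ℝ) (hd : Differentiable ℝ f) {b B a : ℝ}
    (h1 : b < a) (h2 : a < B) (hfb : |f b| < |f a|) (hfB : |f B| < |f a|) :
    ∃ c, b < c ∧ c < B ∧ deriv f c = 0 := by
  rcases lt_or_ge 0 (f a) with h | h
  · refine max_crit f hd h1 h2 ?_ ?_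
    · exact lt_of_le_of_lt (le_abs_self _) (by rwa [abs_of_pos h] at hfb)
    · exact lt_of_le_of_lt (le_abs_self _) (by rwa [abs_of_pos h] at hfB)
  · have habs : |f a| = -f a := abs_of_nonpos h
    obtain ⟨c, hc1, hc2, hc3⟩ := max_crit (fun t => -f t) hd.neg h1 h2
      (lt_of_le_of_lt (neg_le_abs _) (by rwa [habs] at hfb))
      (lt_of_le_of_lt (neg_le_abs _) (by rwa [habs] at hfB))
    refine ⟨c, hc1, hc2, ?_⟩
    have : deriv (fun t => -f t) c = -deriv f c := deriv.neg
    rw [this] at hc3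
    linarith
  
private lemma small_atBot (f : ℝ → ℝ) {ε : ℝ} (hε : 0 < ε)
    (h : Tendsto f atBot (nhds 0)) : ∃ b, ∀ t ≤ b, |f t| < ε := by
  have := Metric.tendsto_nhds.mp h ε hε
  simp only [Real.dist_eq, sub_zero] at this
  exact eventually_atBot.mp this

private lemma small_atTop (f : ℝ → ℝ) {ε : ℝ} (hε : 0 < ε)
    (h : Tendsto f atTop (nhds 0)) : ∃ b, ∀ t, b ≤ t → |f t| < ε := by
  have := Metric.tendsto_nhds.mp h ε hε
  simp only [Real.dist_eq, sub_zero] at this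
  exact eventually_atTop.mp this

private lemma left_crit (f : ℝ → ℝ) (hd : Differentiable ℝ f) (x₀ : ℝ)
    (h0 : f x₀ = 0) (hlim : Tendsto f atBot (nhds 0)) :
    ∃ c, c < x₀ ∧ deriv f c = 0 := by
  by_cases hz : ∃ a, a < x₀ ∧ f a ≠ 0
  · obtain ⟨a, ha, hfa⟩ := hz
    obtain ⟨b, hb⟩ := small_atBot f (abs_pos.2 hfa) hlim
    have hb'a : min b (a - 1) < a := lt_of_le_of_lt (min_le_right _ _) (by linarith)
    obtain ⟨c, _, hc2, hc3⟩ := crit_of_ne f hd hb'a ha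
      (hb _ (min_le_left _ _)) (by rw [h0, abs_zero]; exact abs_pos.2 hfa)
    exact ⟨c, hc2, hc3⟩
  · push_neg at hz
    obtain ⟨c, hc, hc'⟩ := exists_deriv_eq_zero
      (show x₀ - 2 < x₀ - 1 by linarith) hd.continuous.continuousOn
      (by rw [hz _ (by linarith), hz _ (by linarith)])
    exact ⟨c, by obtain ⟨_, h2⟩ := hc; linarith, hc'⟩

private lemma right_crit (f : ℝ → ℝ) (hd : Differentiable ℝ f) (x₀ : ℝ)
    (h0 : f x₀ = 0) (hlim : Tendsto f atTop (nhds 0)) :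
    ∃ c, x₀ < c ∧ deriv f c = 0 := by
  by_cases hz : ∃ a, x₀ < a ∧ f a ≠ 0
  · obtain ⟨a, ha, hfa⟩ := hz
    obtain ⟨b, hb⟩ := small_atTop f (abs_pos.2 hfa) hlim
    have hab' : a < max b (a + 1) := lt_of_lt_of_le (by linarith) (le_max_right _ _)
    obtain ⟨c, hc1, _, hc3⟩ := crit_of_ne f hd ha hab'
      (by rw [h0, abs_zero]; exact abs_pos.2 hfa) (hb _ (le_max_left _ _))
    exact ⟨c, hc1, hc3⟩
  · push_neg at hz
    obtain ⟨c, hc, hc'⟩ := exists_deriv_eq_zero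
      (show x₀ + 1 < x₀ + 2 by linarith) hd.continuous.continuousOn
      (by rw [hz _ (by linarith), hz _ (by linarith)])
    exact ⟨c, by obtain ⟨h1, _⟩ := hc; linarith, hc'⟩

private lemma both_crit (f : ℝ → ℝ) (hd : Differentiable ℝ f) (a : ℝ)
    (hfa : f a ≠ 0) (hbot : Tendsto f atBot (nhds 0))
    (htop : Tendsto f atTop (nhds 0)) : ∃ c, deriv f c = 0 := by
  obtain ⟨b, hb⟩ := small_atBot f (abs_pos.2 hfa) hbot
  obtain ⟨B, hB⟩ := small_atTop f (abs_pos.2 hfa) htop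
  have h1 : min b (a - 1) < a := lt_of_le_of_lt (min_le_right _ _) (by linarith)
  have h2 : a < max B (a + 1) := lt_of_lt_of_le (by linarith) (le_max_right _ _)
  obtain ⟨c, _, _, hc3⟩ := crit_of_ne f hd h1 h2
    (hb _ (min_le_left _ _)) (hB _ (le_max_left _ _))
  exact ⟨c, hc3⟩

private lemma step_crit (f : ℝ → ℝ) (hd : Differentiable ℝ f)
    (hbot : Tendsto f atBot (nhds 0)) (htop : Tendsto f atTop (nhds 0))
    (m : ℕ) (x : Fin (m + 1) → ℝ) (hxm : StrictMono x)
    (hxz : ∀ i, f (x i) = 0) :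
    ∃ x' : Fin (m + 2) → ℝ, StrictMono x' ∧ ∀ i, deriv f (x' i) = 0 := by
  obtain ⟨cl, hcl, hcl0⟩ := left_crit f hd (x 0) (hxz 0) hbot
  obtain ⟨cr, hcr, hcr0⟩ := right_crit f hd (x (Fin.last m)) (hxz _) htop
  have hmid : ∀ j : Fin m, ∃ cj, x j.castSucc < cj ∧ cj < x j.succ ∧
      deriv f cj = 0 := by
    intro j
    obtain ⟨c, hc, hc'⟩ := exists_deriv_eq_zero (hxm (Fin.castSucc_lt_succ : j.castSucc < j.succ))
      hd.continuous.continuousOn (by rw [hxz, hxz])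
    exact ⟨c, hc.1, hc.2, hc'⟩
  choose c hc1 hc2 hc3 using hmid
  refine ⟨Fin.snoc (Fin.cons cl c) cr, ?_, ?_⟩
  · have h1 : ∀ i : Fin (m + 1), (Fin.cons cl c : Fin (m + 1) → ℝ) i < x i := by
      intro i
      induction i using Fin.cases with
      | zero => simpa using hcl
      | succ j => simpa using hc2 j
    have h2 : ∀ i : Fin (m + 1),
        x i < (Fin.snoc (Fin.cons cl c) cr : Fin (m+2) → ℝ) i.succ := by
      intro i
      induction i using Fin.lastCases with
      | last => rw [Fin.succ_last, Fin.snoc_last]; exact hcr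
      | cast j =>
        rw [Fin.succ_castSucc, Fin.snoc_castSucc, Fin.cons_succ]
        exact hc1 j
    refine Fin.strictMono_iff_lt_succ.2 fun i => ?_
    rw [Fin.snoc_castSucc]
    exact lt_trans (h1 i) (h2 i)
  · intro i
    induction i using Fin.lastCases with
    | last => rw [Fin.snoc_last]; exact hcr0
    | cast j =>
      rw [Fin.snoc_castSucc]
      induction j using Fin.cases with
      | zero => simpa using hcl0
      | succ k => simpa using hc3 k

theorem stmt_6 (y : ℝ → ℝ) (hy : ContDiff ℝ (⊤ : ℕ∞) y) (hmono : Monotone y)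
    (y₁ y₂ : ℝ) (hne : y₁ ≠ y₂)
    (hbot : Tendsto y atBot (nhds y₁)) (htop : Tendsto y atTop (nhds y₂))
    (hderiv : ∀ m : ℕ, 1 ≤ m →
      Tendsto (iteratedDeriv m y) atTop (nhds 0) ∧
      Tendsto (iteratedDeriv m y) atBot (nhds 0)) :
    ∀ n : ℕ, 1 ≤ n → ∃ S : Finset ℝ, n - 1 ≤ S.card ∧
      ∀ t ∈ S, iteratedDeriv n y t = 0 := by
  have hdiff : ∀ m : ℕ, Differentiable ℝ (iteratedDeriv m y) := fun m =>
    hy.differentiable_iteratedDeriv m (by exact_mod_cast ENat.coe_lt_top m)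
  have key : ∀ n : ℕ, ∃ x : Fin n → ℝ, StrictMono x ∧
      ∀ i, iteratedDeriv (n + 1) y (x i) = 0 := by
    intro n
    induction n with
    | zero => exact ⟨Fin.elim0, fun i => i.elim0, fun i => i.elim0⟩
    | succ n ih =>
      cases n with
      | zero =>
        have hne' : ∃ a, iteratedDeriv 1 y a ≠ 0 := by
          by_contra h
          push_neg at h
          have hc : ∀ s t : ℝ, y s = y t :=
            is_const_of_deriv_eq_zero (hy.differentiable (by simp))
              (fun t => by simpa [iteratedDeriv_one] using h t)
          have hy0 : y = fun _ => y 0 := funext fun t => hc t 0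
          rw [hy0] at hbot htop
          exact hne ((tendsto_nhds_unique hbot tendsto_const_nhds).trans
            (tendsto_nhds_unique htop tendsto_const_nhds).symm)
        obtain ⟨a, ha⟩ := hne'
        obtain ⟨c, hc⟩ := both_crit _ (hdiff 1) a ha
          (hderiv 1 le_rfl).2 (hderiv 1 le_rfl).1
        exact ⟨fun _ => c, fun i j h => (ne_of_lt h (@Subsingleton.elim _ Fin.subsingleton_one i j)).elim,
          fun i => by rw [iteratedDeriv_succ]; exact hc⟩
      | succ m =>
        obtain ⟨x, hxm, hxz⟩ := ih
        obtain ⟨x', hx'm, hx'z⟩ := step_crit (iteratedDeriv (m + 2) y)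
          (hdiff (m + 2)) (hderiv (m + 2) (by omega)).2 (hderiv (m + 2) (by omega)).1
          m x hxm hxz
        exact ⟨x', hx'm, fun i => by rw [iteratedDeriv_succ]; exact hx'z i⟩
  intro n hn
  obtain ⟨x, hxm, hxz⟩ := key (n - 1)
  refine ⟨Finset.image x Finset.univ, ?_, ?_⟩
  · rw [Finset.card_image_of_injective _ hxm.injective, Finset.card_univ,
      Fintype.card_fin]
  · intro t ht
    simp only [Finset.mem_image, Finset.mem_univ, true_and] at ht
    obtain ⟨i, rfl⟩ := ht
    have := hxz i
    rwa [Nat.sub_add_cancel hn] at this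
end

section
/- For every real ω ≠ 0, the integral ∫_{-∞}^{∞} e^{-iωt} / cosh²(t) dt equals πω / sinh(πω/2). -/
open Real Complex

theorem stmt_9 (ω : ℝ) (hω : ω ≠ 0) :
    ∫ t : ℝ, Complex.exp (-(Complex.I * ω * t)) / (Real.cosh t : ℂ) ^ 2
      = ((π * ω / Real.sinh (π * ω / 2) : ℝ) : ℂ) := by
  set a : ℂ := 1 - (ω : ℂ) / 2 * Complex.I with ha
  set f : ℝ → ℝ := fun t => Real.exp (2*t) / (1 + Real.exp (2*t)) with hf
  set f' : ℝ → ℝ := fun t => 2 * Real.exp (2*t) / (1 + Real.exp (2*t))^2 with hf'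
  set g : ℝ → ℂ := fun x => 2 * ((x : ℂ) ^ (a - 1) * (1 - (x:ℂ)) ^ (1 - a)) with hg
  have hden : ∀ t : ℝ, 0 < 1 + Real.exp (2*t) := fun t => by positivity
  have hderiv : ∀ t : ℝ, HasDerivAt f (f' t) t := by
    intro t
    have h1 : HasDerivAt (fun t : ℝ => Real.exp (2*t)) (2 * Real.exp (2*t)) t := by
      simpa [mul_comm] using ((hasDerivAt_id t).const_mul 2).exp
    have h2 : HasDerivAt (fun t : ℝ => 1 + Real.exp (2*t)) (2 * Real.exp (2*t)) t := by
      simpa using h1.const_add 1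
    have := h1.div h2 (hden t).ne'
    refine this.congr_deriv ?_
    have := (hden t).ne'
    simp only [hf']
    field_simp
    ring
  have hinj : Set.InjOn f Set.univ := by
    intro s _ t _ hst
    have h1 := hden s
    have h2 := hden t
    rw [hf] at hst
    simp only [div_eq_div_iff h1.ne' h2.ne'] at hst
    have hes : Real.exp (2*s) = Real.exp (2*t) := by nlinarith
    have := Real.exp_injective hes
    linarith
  have himg : f '' Set.univ = Set.Ioo (0:ℝ) 1 := by
    ext x
    simp only [Set.image_univ, Set.mem_range, Set.mem_Ioo]
    constructor
    · rintro ⟨t, rfl⟩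
      have h1 := hden t
      have h2 := Real.exp_pos (2*t)
      constructor
      · exact div_pos h2 h1
      · rw [div_lt_one h1]; linarith
    · rintro ⟨h0, h1⟩
      have hx1 : 0 < 1 - x := by linarith
      refine ⟨Real.log (x/(1-x)) / 2, ?_⟩
      have he : Real.exp (2 * (Real.log (x/(1-x)) / 2)) = x/(1-x) := by
        rw [show 2 * (Real.log (x/(1-x)) / 2) = Real.log (x/(1-x)) by ring]
        exact Real.exp_log (div_pos h0 hx1)
      have h3 : 1 + x/(1-x) = 1/(1-x) := by field_simp; ring
      simp only [hf, he, h3]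
      rw [div_div_div_cancel_right₀]
      · simp
      · exact hx1.ne'
  have hchg := MeasureTheory.integral_image_eq_integral_abs_deriv_smul MeasurableSet.univ
      (fun t _ => (hderiv t).hasDerivWithinAt) hinj g
  rw [himg, MeasureTheory.setIntegral_univ] at hchg
  have hpt : ∀ t : ℝ, |f' t| • g (f t)
      = Complex.exp (-(Complex.I * ω * t)) / (Real.cosh t : ℂ) ^ 2 := by
    intro t
    have hEp : (0:ℝ) < Real.exp (2*t) := Real.exp_pos _
    have hdp := hden t
    have hfpos : 0 < f t := div_pos hEp hdp
    have h1f : 1 - f t = 1/(1 + Real.exp (2*t)) := by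
      rw [hf]; field_simp; ring
    have h1fpos : 0 < 1 - f t := by rw [h1f]; positivity
    have hfppos : 0 < f' t := by rw [hf']; positivity
    set L : ℝ := Real.log (1 + Real.exp (2*t)) with hL
    have hlogf : Real.log (f t) = 2*t - L := by
      rw [hf, Real.log_div hEp.ne' hdp.ne', Real.log_exp]
    have hlog1f : Real.log (1 - f t) = -L := by
      rw [h1f, one_div, Real.log_inv]
    have c1 : ((f t : ℝ) : ℂ) ^ (a - 1) = Complex.exp ((a-1) * ((2*t - L : ℝ) : ℂ)) := by
      rw [Complex.cpow_def_of_ne_zero (by exact_mod_cast hfpos.ne'),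
        ← Complex.ofReal_log hfpos.le, hlogf, mul_comm]
    have c2 : (1 - ((f t : ℝ) : ℂ)) ^ (1 - a) = Complex.exp ((1-a) * ((-L : ℝ) : ℂ)) := by
      have : (1 : ℂ) - ((f t : ℝ) : ℂ) = ((1 - f t : ℝ) : ℂ) := by push_cast; ring
      rw [this, Complex.cpow_def_of_ne_zero (by exact_mod_cast h1fpos.ne'),
        ← Complex.ofReal_log h1fpos.le, hlog1f, mul_comm]
    have hexps : (a-1) * ((2*t - L : ℝ) : ℂ) + (1-a) * ((-L : ℝ) : ℂ)
        = -(Complex.I * ω * t) := by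
      rw [ha]; push_cast; ring
    have hgf : g (f t) = 2 * Complex.exp (-(Complex.I * ω * t)) := by
      rw [hg]
      simp only [c1, c2, ← Complex.exp_add, hexps]
    have hcosh : (4 * Real.exp (2*t)) * Real.cosh t ^ 2 = (1 + Real.exp (2*t))^2 := by
      have he2 : Real.exp (2*t) = Real.exp t ^ 2 := by
        rw [two_mul, Real.exp_add]; ring
      rw [Real.cosh_eq, Real.exp_neg, he2]
      have := (Real.exp_pos t).ne'
      field_simp
      ring
    have hchp : 0 < Real.cosh t := Real.cosh_pos t
    have hr : f' t * 2 = 1 / Real.cosh t ^ 2 := by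
      rw [hf', eq_div_iff (by positivity)]
      field_simp
      linarith [hcosh]
    rw [abs_of_pos hfppos, hgf, Complex.real_smul]
    have hrc : ((f' t : ℝ) : ℂ) * 2 = 1 / ((Real.cosh t : ℝ) : ℂ)^2 := by
      exact_mod_cast congrArg (fun x : ℝ => (x : ℂ)) hr
    rw [← mul_assoc, hrc]
    ring
  simp_rw [hpt] at hchg
  rw [← hchg]
  have hbeta : (∫ x in Set.Ioo (0:ℝ) 1, g x) = 2 * Complex.betaIntegral a (2 - a) := by
    rw [Complex.betaIntegral, intervalIntegral.integral_of_le zero_le_one,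
      ← MeasureTheory.integral_Ioc_eq_integral_Ioo, hg, MeasureTheory.integral_const_mul]
    congr 1
    refine MeasureTheory.setIntegral_congr_fun measurableSet_Ioc fun x hx => ?_
    simp only [show (2:ℂ) - a - 1 = 1 - a from by ring]
  have h1a' : (1:ℂ) - a = (ω:ℂ)/2 * Complex.I := by rw [ha]; ring
  have h1a : (1:ℂ) - a ≠ 0 := by
    rw [h1a']
    exact mul_ne_zero (div_ne_zero (Complex.ofReal_ne_zero.mpr hω) two_ne_zero) Complex.I_ne_zero
  have hra : 0 < a.re := by rw [ha]; simp
  have hr2a : 0 < ((2:ℂ) - a).re := by rw [ha]; simp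
  have hG := Complex.Gamma_mul_Gamma_eq_betaIntegral hra hr2a
  rw [show a + (2 - a) = 2 from by ring] at hG
  have hG2 : Complex.Gamma 2 = 1 := by
    simpa using Complex.Gamma_nat_eq_factorial 1
  rw [hG2, one_mul] at hG
  have h5 : Complex.Gamma (2 - a) = (1 - a) * Complex.Gamma (1 - a) := by
    rw [show (2:ℂ) - a = (1 - a) + 1 from by ring, Complex.Gamma_add_one _ h1a]
  have hsin : Complex.sin ((π:ℂ) * a) = ((Real.sinh (π*ω/2) : ℝ) : ℂ) * Complex.I := by
    rw [show ((π:ℂ)) * a = (π:ℂ) - ((π*ω/2 : ℝ) : ℂ) * Complex.I from by rw [ha]; push_cast; ring,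
      Complex.sin_pi_sub, Complex.sin_mul_I, ← Complex.ofReal_sinh]
  have hval : Complex.betaIntegral a (2 - a) = (1 - a) * ((π:ℂ) / Complex.sin ((π:ℂ) * a)) := by
    calc Complex.betaIntegral a (2 - a) = Complex.Gamma a * Complex.Gamma (2 - a) := hG.symm
      _ = (1 - a) * (Complex.Gamma a * Complex.Gamma (1 - a)) := by rw [h5]; ring
      _ = (1 - a) * ((π:ℂ) / Complex.sin ((π:ℂ) * a)) := by
          rw [Complex.Gamma_mul_Gamma_one_sub]
  have hsh : Real.sinh (π*ω/2) ≠ 0 := by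
    rw [Real.sinh_ne_zero]
    exact div_ne_zero (mul_ne_zero Real.pi_ne_zero hω) two_ne_zero
  have hshc : ((Real.sinh (π*ω/2) : ℝ) : ℂ) ≠ 0 := Complex.ofReal_ne_zero.mpr hsh
  rw [hbeta, hval, hsin, h1a', Complex.ofReal_div]
  push_cast
  field_simp [Complex.I_ne_zero]
end

section
/- Let β > 0, k > 0 and ν > 0 be real numbers. For every real ω, the integral ∫_{-∞}^{∞} e^{-iωt} e^{-βt} (1 + k e^{-βt})^{-(1/ν + 1)} dt converges and equals (ν/(kβ)) · e^{-(iω/β) log k} · Γ(1/ν − iω/β) · Γ(1 + iω/β) / Γ(1/ν), where Γ denotes the complex Gamma function. -/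
open Real Complex MeasureTheory Set

lemma cpow_pos_real_aux {x : ℝ} (hx : 0 < x) (s : ℂ) :
    (x : ℂ) ^ s = Complex.exp (s * (Real.log x : ℂ)) := by
  rw [Complex.cpow_def_of_ne_zero (by exact_mod_cast hx.ne'), Complex.ofReal_log hx.le, mul_comm]

theorem stmt_10 (β k ν : ℝ) (hβ : 0 < β) (hk : 0 < k) (hν : 0 < ν) (ω : ℝ) :
    Integrable (fun t : ℝ => Complex.exp (-(Complex.I * ω * t)) *
        ((Real.exp (-β * t) * (1 + k * Real.exp (-β * t)) ^ (-(1/ν + 1) : ℝ) : ℝ) : ℂ)) ∧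
    ∫ t : ℝ, Complex.exp (-(Complex.I * ω * t)) *
        ((Real.exp (-β * t) * (1 + k * Real.exp (-β * t)) ^ (-(1/ν + 1) : ℝ) : ℝ) : ℂ)
      = ((ν / (k * β) : ℝ) : ℂ) * Complex.exp (-(Complex.I * ω / β) * Real.log k) *
          Complex.Gamma ((1/ν : ℝ) - Complex.I * ω / β) *
          Complex.Gamma (1 + Complex.I * ω / β) / Complex.Gamma ((1/ν : ℝ)) := by
  have hβC : (β : ℂ) ≠ 0 := by exact_mod_cast hβ.ne'
  have hνC : (ν : ℂ) ≠ 0 := by exact_mod_cast hν.ne'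
  have hkC : (k : ℂ) ≠ 0 := by exact_mod_cast hk.ne'
  set u : ℂ := ((1/ν : ℝ) : ℂ) - Complex.I * ω / β with hu
  set v : ℂ := 1 + Complex.I * ω / β with hv
  have hIωβ : Complex.I * ω / β = ((ω / β : ℝ) : ℂ) * Complex.I := by
    push_cast; ring
  have hre_u : 0 < u.re := by
    rw [hu, hIωβ]
    simp only [Complex.sub_re, Complex.ofReal_re, Complex.mul_re, Complex.I_re,
      Complex.ofReal_im, Complex.I_im, mul_zero, mul_one, zero_mul, sub_zero, zero_sub, neg_zero]
    positivity
  have hre_v : 0 < v.re := by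
    rw [hv, hIωβ]
    simp [Complex.add_re, Complex.mul_re]
  -- the substitution
  set φ : ℝ → ℝ := fun t => (1 + k * Real.exp (-β * t))⁻¹ with hφdef
  set φ' : ℝ → ℝ := fun t => k * β * Real.exp (-β * t) / (1 + k * Real.exp (-β * t)) ^ 2
    with hφ'def
  have hA : ∀ t : ℝ, 0 < 1 + k * Real.exp (-β * t) := fun t => by positivity
  have h1A : ∀ t : ℝ, 1 < 1 + k * Real.exp (-β * t) := fun t => by
    nlinarith [Real.exp_pos (-β * t)]
  have hderiv : ∀ t : ℝ, HasDerivAt φ (φ' t) t := by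
    intro t
    have h1 : HasDerivAt (fun t : ℝ => 1 + k * Real.exp (-β * t))
        (k * (Real.exp (-β * t) * -β)) t := by
      have := ((Real.hasDerivAt_exp (-β * t)).comp t
        ((hasDerivAt_id t).const_mul (-β))).const_mul k
      simpa [mul_comm, mul_assoc, mul_left_comm] using this.const_add 1
    have h2 := h1.inv (hA t).ne'
    refine h2.congr_deriv ?_
    rw [hφ'def]
    field_simp
  have hpos : ∀ t : ℝ, 0 < φ' t := fun t => by
    rw [hφ'def]
    have h1 := Real.exp_pos (-β * t)
    have h2 := hA t
    positivity
  have hmono : StrictMono φ :=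
    strictMono_of_deriv_pos (fun t => by rw [(hderiv t).deriv]; exact hpos t)
  have hinj : InjOn φ univ := hmono.injective.injOn
  have hrange : φ '' univ = Ioo (0 : ℝ) 1 := by
    rw [image_univ]
    apply Subset.antisymm
    · rintro _ ⟨t, rfl⟩
      exact ⟨inv_pos.mpr (hA t), inv_lt_one_of_one_lt₀ (h1A t)⟩
    · rintro y ⟨hy0, hy1⟩
      have h1y : 0 < 1 - y := by linarith
      refine ⟨-(1/β) * Real.log ((1 - y) / (k * y)), ?_⟩
      have hbb : -β * (-(1/β) * Real.log ((1 - y) / (k * y)))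
          = Real.log ((1 - y) / (k * y)) := by field_simp
      rw [hφdef]
      simp only
      rw [hbb, Real.exp_log (by positivity)]
      have hy' : 1 + k * ((1 - y) / (k * y)) = 1/y := by
        rw [mul_div_assoc', mul_div_mul_left _ _ hk.ne']
        field_simp
        ring
      rw [hy', one_div, inv_inv]
  -- the beta integrand
  set c : ℂ := ((1 / (k * β) : ℝ) : ℂ) * Complex.exp (-(Complex.I * ω / β) * Real.log k)
    with hc
  set G : ℝ → ℂ := fun x => c * ((x : ℂ) ^ (u - 1) * ((1 : ℂ) - (x : ℂ)) ^ (v - 1)) with hG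
  -- the key pointwise identity
  have key : ∀ t : ℝ, |φ' t| • G (φ t) =
      Complex.exp (-(Complex.I * ω * t)) *
        ((Real.exp (-β * t) * (1 + k * Real.exp (-β * t)) ^ (-(1/ν + 1) : ℝ) : ℝ) : ℂ) := by
    intro t
    have hAt := hA t
    set A : ℝ := 1 + k * Real.exp (-β * t) with hAdef
    set L : ℝ := Real.log A with hL
    have hφt : φ t = A⁻¹ := rfl
    have hφtpos : 0 < φ t := inv_pos.mpr hAt
    have h1φ : 1 - φ t = k * Real.exp (-β * t) / A := by
      rw [hφt, hAdef]; field_simp; ring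
    have h1φpos : 0 < 1 - φ t := by
      rw [h1φ]; positivity
    have hlogφ : Real.log (φ t) = -L := by rw [hφt, Real.log_inv, hL]
    have hlog1φ : Real.log (1 - φ t) = Real.log k + (-β * t) - L := by
      rw [h1φ, Real.log_div (by positivity) hAt.ne', Real.log_mul hk.ne'
        (Real.exp_pos _).ne', Real.log_exp, hL]
    have habs : |φ' t| = φ' t := abs_of_pos (hpos t)
    have hfrac : φ' t * (1 / (k * β)) = Real.exp (-β * t - 2 * L) := by
      have hexp2L : Real.exp (2 * L) = A ^ 2 := by
        rw [show (2 : ℝ) * L = L + L by ring, Real.exp_add, hL, Real.exp_log hAt, sq]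
      rw [Real.exp_sub, hexp2L, hφ'def]
      field_simp
      rw [hAdef]
      ring
    have hrpow : A ^ (-(1/ν + 1) : ℝ) = Real.exp ((-(1/ν + 1)) * L) := by
      rw [Real.rpow_def_of_pos hAt, hL, mul_comm]
    have hcast1φ : (1 : ℂ) - ((φ t : ℝ) : ℂ) = ((1 - φ t : ℝ) : ℂ) := by push_cast; ring
    have hstep : (φ' t : ℂ) * ((1 / (k * β) : ℝ) : ℂ)
        = Complex.exp ((-β * t - 2 * L : ℝ) : ℂ) := by
      rw [← Complex.ofReal_mul, hfrac, Complex.ofReal_exp]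
    calc |φ' t| • G (φ t)
        = (φ' t : ℂ) * ((1 / (k * β) : ℝ) : ℂ) *
            (Complex.exp (-(Complex.I * ω / β) * Real.log k) *
              (Complex.exp ((u - 1) * ((-L : ℝ) : ℂ)) *
                Complex.exp ((v - 1) * ((Real.log k + (-β * t) - L : ℝ) : ℂ)))) := by
          rw [Complex.real_smul, habs, hG]
          simp only
          rw [hcast1φ, cpow_pos_real_aux hφtpos, cpow_pos_real_aux h1φpos, hlogφ, hlog1φ, hc]
          ring
      _ = Complex.exp (((-β * t - 2 * L : ℝ) : ℂ) + (-(Complex.I * ω / β) * Real.log k)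
            + (u - 1) * ((-L : ℝ) : ℂ) + (v - 1) * ((Real.log k + (-β * t) - L : ℝ) : ℂ)) := by
          rw [hstep, ← Complex.exp_add, ← Complex.exp_add, ← Complex.exp_add]
          congr 1
          ring
      _ = Complex.exp (-(Complex.I * ω * t) + ((-β * t : ℝ) : ℂ)
            + (((-(1/ν + 1)) * L : ℝ) : ℂ)) := by
          congr 1
          rw [hu, hv]
          push_cast
          field_simp
          ring
      _ = Complex.exp (-(Complex.I * ω * t)) *
            ((Real.exp (-β * t) * A ^ (-(1/ν + 1) : ℝ) : ℝ) : ℂ) := by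
          rw [hrpow, Complex.exp_add, Complex.exp_add]
          push_cast [Complex.ofReal_exp]
          ring
  -- integrability of the beta integrand on (0,1)
  have hbeta : IntervalIntegrable
      (fun x : ℝ => (x : ℂ) ^ (u - 1) * ((1 : ℂ) - (x : ℂ)) ^ (v - 1)) volume 0 1 :=
    Complex.betaIntegral_convergent hre_u hre_v
  have hGIoc : IntegrableOn G (Ioc (0 : ℝ) 1) := by
    have := (intervalIntegrable_iff_integrableOn_Ioc_of_le zero_le_one).mp hbeta
    exact (this.const_mul c)
  have hGint : IntegrableOn G (Ioo (0 : ℝ) 1) := hGIoc.mono_set Ioo_subset_Ioc_self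
  have hφ'W : ∀ x ∈ (univ : Set ℝ), HasDerivWithinAt φ (φ' x) univ x :=
    fun x _ => (hderiv x).hasDerivWithinAt
  -- integrability
  have hInt : Integrable (fun t : ℝ => Complex.exp (-(Complex.I * ω * t)) *
      ((Real.exp (-β * t) * (1 + k * Real.exp (-β * t)) ^ (-(1/ν + 1) : ℝ) : ℝ) : ℂ)) := by
    have h1 : IntegrableOn G (φ '' univ) := by rw [hrange]; exact hGint
    have h2 := (integrableOn_image_iff_integrableOn_abs_deriv_smul MeasurableSet.univ
      hφ'W hinj G).mp h1
    rw [integrableOn_univ] at h2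
    exact (funext key) ▸ h2
  refine ⟨hInt, ?_⟩
  -- compute the integral
  have hchange : (∫ t : ℝ, Complex.exp (-(Complex.I * ω * t)) *
      ((Real.exp (-β * t) * (1 + k * Real.exp (-β * t)) ^ (-(1/ν + 1) : ℝ) : ℝ) : ℂ))
      = ∫ x in Ioo (0 : ℝ) 1, G x := by
    rw [← hrange, integral_image_eq_integral_abs_deriv_smul MeasurableSet.univ hφ'W hinj G,
      MeasureTheory.setIntegral_univ]
    exact congrArg _ ((funext key).symm)
  rw [hchange]
  have hIoo : (∫ x in Ioo (0 : ℝ) 1, G x) = c * Complex.betaIntegral u v := by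
    rw [Complex.betaIntegral, intervalIntegral.integral_of_le zero_le_one,
      MeasureTheory.integral_Ioc_eq_integral_Ioo, hG, MeasureTheory.integral_const_mul]
  rw [hIoo]
  -- beta → Gamma
  have huv : u + v = ((1/ν : ℝ) : ℂ) + 1 := by rw [hu, hv]; ring
  have hΓν : Complex.Gamma ((1/ν : ℝ) : ℂ) ≠ 0 := by
    apply Complex.Gamma_ne_zero
    intro m h
    have : ((1/ν : ℝ) : ℂ).re = (-(m : ℂ)).re := by rw [h]
    simp only [Complex.ofReal_re, Complex.neg_re, Complex.natCast_re] at this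
    have h2 : 0 < 1/ν := by positivity
    have h3 : (0 : ℝ) ≤ (m : ℝ) := Nat.cast_nonneg m
    linarith
  have hΓuv : Complex.Gamma (u + v) = ((1/ν : ℝ) : ℂ) * Complex.Gamma ((1/ν : ℝ) : ℂ) := by
    rw [huv, Complex.Gamma_add_one]
    intro h
    rw [Complex.ofReal_eq_zero] at h
    have : 0 < 1/ν := by positivity
    linarith
  have hΓuv_ne : Complex.Gamma (u + v) ≠ 0 := by
    rw [hΓuv]
    apply mul_ne_zero _ hΓν
    rw [Ne, Complex.ofReal_eq_zero]
    have : 0 < 1/ν := by positivity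
    intro h; linarith
  have hBeta : Complex.betaIntegral u v
      = Complex.Gamma u * Complex.Gamma v / Complex.Gamma (u + v) := by
    rw [eq_div_iff hΓuv_ne, Complex.Gamma_mul_Gamma_eq_betaIntegral hre_u hre_v]
    ring
  rw [hBeta, hΓuv, hc]
  have h1 : ((ν / (k * β) : ℝ) : ℂ) = ((1 / (k * β) : ℝ) : ℂ) * (ν : ℂ) := by
    push_cast; ring
  have h2 : ((1/ν : ℝ) : ℂ) = (ν : ℂ)⁻¹ := by push_cast; exact one_div _
  rw [h1, h2]
  field_simp
end
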